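/- arXiv:1410.1561 — 3 statements merged into one kernel-verified Lean document; each statement's English description precedes it below -/
import Mathlib

section
/- If ν is a Volkenborn distribution on ℤ_p and μ is a bounded distribution on ℤ_p, then the convolution ν∗μ is a Volkenborn distribution. In particular the set of Volkenborn distributions is a module over the ring of bounded (ℤ_p-valued) distributions under convolution. -/
/- We model ℂ_p (not available in Mathlib) as an abstract complete
nonarchimedean nontrivially normed field `K`. -/

open Filter Finset

/-- `μ n x` represents the value `μ(x + pⁿℤ_p)`: it depends only on `x mod pⁿ`. -/
def LocallyConst (p : ℕ) [Fact p.Prime] {K : Type*} [NormedField K]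
    (μ : ℕ → ℤ_[p] → K) : Prop :=
  ∀ (n : ℕ) (x y : ℤ_[p]), PadicInt.toZModPow n x = PadicInt.toZModPow n y → μ n x = μ n y

/-- The distribution compatibility relation
`μ(x + pⁿℤ_p) = ∑_{k=0}^{p-1} μ(x + k pⁿ + pⁿ⁺¹ℤ_p)`. -/
def IsDistrib (p : ℕ) [Fact p.Prime] {K : Type*} [NormedField K]
    (μ : ℕ → ℤ_[p] → K) : Prop :=
  ∀ (n : ℕ) (x : ℤ_[p]), μ n x = ∑ k ∈ Finset.range p, μ (n + 1) (x + (k : ℤ_[p]) * (p : ℤ_[p]) ^ n)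

/-- `μ` is Volkenborn with bound `B`:
`|p·μ(x + pⁿ⁺¹ℤ_p) − μ(x + pⁿℤ_p)| ≤ B` for all `x`, `n`. -/
def IsVolkenborn (p : ℕ) [Fact p.Prime] {K : Type*} [NormedField K]
    (μ : ℕ → ℤ_[p] → K) (B : ℝ) : Prop :=
  ∀ (n : ℕ) (x : ℤ_[p]), ‖(p : K) * μ (n + 1) x - μ n x‖ ≤ B

/-- The convolution of two distributions:
`(ν∗μ)(c + pⁿℤ_p) = ∑_{a=0}^{pⁿ-1} ν(a + pⁿℤ_p) μ(c − a + pⁿℤ_p)`. -/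
noncomputable def distConv (p : ℕ) [Fact p.Prime] {K : Type*} [NormedField K]
    (ν μ : ℕ → ℤ_[p] → K) : ℕ → ℤ_[p] → K :=
  fun n c => ∑ a ∈ Finset.range (p ^ n), ν n (a : ℤ_[p]) * μ n (c - (a : ℤ_[p]))

/- Sort the residues mod pⁿ⁺¹ by their residue `a` mod pⁿ and their digit `k`. Since `ν` is
constant on `a + pⁿℤ_p`, and the distribution relation splits `μ(c − a + pⁿℤ_p)` into the values
`μ(c − a − k pⁿ + pⁿ⁺¹ℤ_p)`, the difference `p·(ν∗μ)(c + pⁿ⁺¹ℤ_p) − (ν∗μ)(c + pⁿℤ_p)` is the sum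
over `y = a + k pⁿ` of `(p·ν(y + pⁿ⁺¹ℤ_p) − ν(y + pⁿℤ_p))·μ(c − y + pⁿ⁺¹ℤ_p)`. Each term has norm
at most `Bν·Bμ`, hence so has the sum, by the ultrametric inequality. -/

theorem Finset.sum_range_mul_eq_sum_sum {M : Type*} [AddCommMonoid M] (f : ℕ → M) (m n : ℕ) :
    ∑ i ∈ range (m * n), f i = ∑ a ∈ range m, ∑ k ∈ range n, f (a + k * m) := by
  rw [sum_comm]
  induction n with
  | zero => simp
  | succ n ih => rw [Nat.mul_succ, sum_range_add, ih, sum_range_succ]; simp [add_comm, mul_comm]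

section

variable {p : ℕ} [Fact p.Prime] {K : Type*} [NormedField K] {μ ν : ℕ → ℤ_[p] → K}

theorem LocallyConst.apply_add_mul_pow (h : LocallyConst p μ) (n : ℕ) (x y : ℤ_[p]) :
    μ n (x + y * (p : ℤ_[p]) ^ n) = μ n x := by
  apply h
  have : ((p : ZMod (p ^ n))) ^ n = 0 := by exact_mod_cast ZMod.natCast_self (p ^ n)
  simp [this]

theorem IsDistrib.apply_eq_sum_sub (hloc : LocallyConst p μ) (hdist : IsDistrib p μ)
    (n : ℕ) (x : ℤ_[p]) :
    μ n x = ∑ k ∈ range p, μ (n + 1) (x - (k : ℤ_[p]) * (p : ℤ_[p]) ^ n) := by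
  have hp : 1 ≤ p := (Fact.out : p.Prime).one_lt.le
  set x₀ := x - ((p - 1 : ℕ) : ℤ_[p]) * (p : ℤ_[p]) ^ n with hx₀
  calc μ n x = μ n (x₀ + ((p - 1 : ℕ) : ℤ_[p]) * (p : ℤ_[p]) ^ n) := by rw [sub_add_cancel]
    _ = μ n x₀ := hloc.apply_add_mul_pow n _ _
    _ = ∑ k ∈ range p, μ (n + 1) (x₀ + ((p - 1 - k : ℕ) : ℤ_[p]) * (p : ℤ_[p]) ^ n) := by
      rw [hdist, ← sum_range_reflect]
    _ = ∑ k ∈ range p, μ (n + 1) (x - (k : ℤ_[p]) * (p : ℤ_[p]) ^ n) := by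
      refine sum_congr rfl fun k hk => ?_
      have hkp : k ≤ p - 1 := Nat.le_sub_one_of_lt (mem_range.mp hk)
      congr 1
      rw [hx₀, Nat.cast_sub hkp, Nat.cast_sub hp]
      ring

theorem IsVolkenborn.nonneg {B : ℝ} (h : IsVolkenborn p μ B) : 0 ≤ B :=
  (norm_nonneg _).trans (h 0 0)

theorem distConv_succ_eq_sum_sum (ν μ : ℕ → ℤ_[p] → K) (n : ℕ) (c : ℤ_[p]) :
    distConv p ν μ (n + 1) c = ∑ a ∈ range (p ^ n), ∑ k ∈ range p,
      ν (n + 1) (a + k * (p : ℤ_[p]) ^ n) * μ (n + 1) (c - (a + k * (p : ℤ_[p]) ^ n)) := by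
  rw [distConv, pow_succ, sum_range_mul_eq_sum_sum]
  push_cast
  rfl

theorem distConv_eq_sum_sum (hνloc : LocallyConst p ν) (hμloc : LocallyConst p μ)
    (hμdist : IsDistrib p μ) (n : ℕ) (c : ℤ_[p]) :
    distConv p ν μ n c = ∑ a ∈ range (p ^ n), ∑ k ∈ range p,
      ν n (a + k * (p : ℤ_[p]) ^ n) * μ (n + 1) (c - (a + k * (p : ℤ_[p]) ^ n)) := by
  refine sum_congr rfl fun a _ => ?_
  rw [hμdist.apply_eq_sum_sub hμloc, mul_sum]
  refine sum_congr rfl fun k _ => ?_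
  rw [hνloc.apply_add_mul_pow, sub_sub]

theorem IsVolkenborn.distConv [IsUltrametricDist K] {Bν Bμ : ℝ} (hν : IsVolkenborn p ν Bν)
    (hνloc : LocallyConst p ν) (hμloc : LocallyConst p μ) (hμdist : IsDistrib p μ)
    (hμ : ∀ n x, ‖μ n x‖ ≤ Bμ) :
    IsVolkenborn p (distConv p ν μ) (Bν * Bμ) := by
  have hB : 0 ≤ Bν * Bμ := mul_nonneg hν.nonneg ((norm_nonneg _).trans (hμ 0 0))
  intro n c
  rw [distConv_succ_eq_sum_sum, distConv_eq_sum_sum hνloc hμloc hμdist, mul_sum,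
    ← sum_sub_distrib]
  refine IsUltrametricDist.norm_sum_le_of_forall_le_of_nonneg hB fun a _ => ?_
  rw [mul_sum, ← sum_sub_distrib]
  refine IsUltrametricDist.norm_sum_le_of_forall_le_of_nonneg hB fun k _ => ?_
  rw [← mul_assoc, ← sub_mul, norm_mul]
  exact mul_le_mul (hν _ _) (hμ _ _) (norm_nonneg _) hν.nonneg

end

theorem stmt7_general {p : ℕ} [Fact p.Prime] {K : Type*} [NontriviallyNormedField K]
    [IsUltrametricDist K]
    (ν μ : ℕ → ℤ_[p] → K)
    (hνloc : LocallyConst p ν)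
    (hμloc : LocallyConst p μ) (hμdist : IsDistrib p μ)
    {Bν : ℝ} (hν : IsVolkenborn p ν Bν)
    {Bμ : ℝ} (hμ : ∀ (n : ℕ) (x : ℤ_[p]), ‖μ n x‖ ≤ Bμ) :
    ∃ B : ℝ, 0 ≤ B ∧ IsVolkenborn p (distConv p ν μ) B :=
  ⟨Bν * Bμ, mul_nonneg hν.nonneg ((norm_nonneg _).trans (hμ 0 0)),
    hν.distConv hνloc hμloc hμdist hμ⟩

/-- the convolution of a Volkenborn distribution with a bounded
distribution is Volkenborn. -/
theorem stmt7 {p : ℕ} [Fact p.Prime] {K : Type*} [NontriviallyNormedField K]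
    [IsUltrametricDist K] [CompleteSpace K]
    (ν μ : ℕ → ℤ_[p] → K)
    (hνloc : LocallyConst p ν) (hνdist : IsDistrib p ν)
    (hμloc : LocallyConst p μ) (hμdist : IsDistrib p μ)
    {Bν : ℝ} (hν : IsVolkenborn p ν Bν)
    {Bμ : ℝ} (hμ : ∀ (n : ℕ) (x : ℤ_[p]), ‖μ n x‖ ≤ Bμ) :
    ∃ B : ℝ, 0 ≤ B ∧ IsVolkenborn p (distConv p ν μ) B :=
  stmt7_general ν μ hνloc hμloc hμdist hν hμ
end

section
/- Let ν be a Volkenborn distribution and μ a bounded distribution on ℤ_p. Then for all a ∈ ℤ_p and n ≥ 0, p·(ν∗μ)(a + p^{n+1} ℤ_p) − (ν∗μ)(a + p^n ℤ_p) = Σ_{j=0}^{p^n−1} Σ_{k=0}^{p−1} μ(a − j − k p^n + p^{n+1} ℤ_p) · (p·ν(j + k p^n + p^{n+1} ℤ_p) − ν(j + p^n ℤ_p)). -/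
/- We model ℂ_p (not available in Mathlib) as an abstract complete
nonarchimedean nontrivially normed field `K`. -/

open Filter Finset

/-- Splitting a sum over `range (m * q)` along base-`m` digits. -/
lemma sum_range_mul_split {M : Type*} [AddCommMonoid M] (m q : ℕ) (hm : 0 < m) (f : ℕ → M) :
    ∑ i ∈ Finset.range (m * q), f i
      = ∑ j ∈ Finset.range m, ∑ k ∈ Finset.range q, f (j + k * m) := by
  rw [← Finset.sum_product']
  refine Finset.sum_nbij' (fun i => (i % m, i / m)) (fun x => x.1 + x.2 * m) ?_ ?_ ?_ ?_ ?_
  · intro i hi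
    simp only [Finset.mem_range] at hi
    simp only [Finset.mem_product, Finset.mem_range]
    exact ⟨Nat.mod_lt _ hm, (Nat.div_lt_iff_lt_mul hm).2 (by rwa [mul_comm] at hi)⟩
  · intro x hx
    simp only [Finset.mem_product, Finset.mem_range] at hx
    simp only [Finset.mem_range]
    have hlt : x.1 + x.2 * m < (x.2 + 1) * m := by
      rw [add_mul, one_mul]; omega
    have hle : (x.2 + 1) * m ≤ q * m := Nat.mul_le_mul_right m (by omega)
    calc x.1 + x.2 * m < (x.2 + 1) * m := hlt
      _ ≤ q * m := hle
      _ = m * q := Nat.mul_comm _ _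
  · intro i _; exact Nat.mod_add_div' i m
  · intro x hx
    simp only [Finset.mem_product, Finset.mem_range] at hx
    have h1 : (x.1 + x.2 * m) % m = x.1 := by
      rw [Nat.add_mul_mod_self_right, Nat.mod_eq_of_lt hx.1]
    have h2 : (x.1 + x.2 * m) / m = x.2 := by
      rw [Nat.add_mul_div_right _ _ hm, Nat.div_eq_of_lt hx.1, Nat.zero_add]
    simp [h1, h2]
  · intro i _; rw [Nat.mod_add_div' i m]

/-- Multiples of `pⁿ⁺¹` vanish under `toZModPow (n+1)`. -/
lemma toZModPow_p_pow_succ {p : ℕ} [Fact p.Prime] (n : ℕ) :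
    PadicInt.toZModPow (p := p) (n + 1) ((p : ℤ_[p]) ^ (n + 1)) = 0 := by
  have : ((p : ℤ_[p]) ^ (n + 1)) = ((p ^ (n + 1) : ℕ) : ℤ_[p]) := by push_cast; ring
  rw [this, map_natCast, ZMod.natCast_self]

/-- Reflecting the inner sum `k ↦ x + k pⁿ` to `k ↦ x − k pⁿ`. -/
lemma sum_flip {p : ℕ} [Fact p.Prime] {K : Type*} [NormedField K] (μ : ℕ → ℤ_[p] → K)
    (hμloc : LocallyConst p μ) (n : ℕ) (x : ℤ_[p]) :
    ∑ k ∈ Finset.range p, μ (n + 1) (x + (k : ℤ_[p]) * (p : ℤ_[p]) ^ n)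
      = ∑ k ∈ Finset.range p, μ (n + 1) (x - (k : ℤ_[p]) * (p : ℤ_[p]) ^ n) := by
  have hp : 0 < p := (Fact.out : p.Prime).pos
  refine Finset.sum_nbij' (fun k => (p - k) % p) (fun k => (p - k) % p) ?_ ?_ ?_ ?_ ?_
  · intro k _; exact Finset.mem_range.2 (Nat.mod_lt _ hp)
  · intro k _; exact Finset.mem_range.2 (Nat.mod_lt _ hp)
  · intro k hk
    simp only [Finset.mem_range] at hk
    show (p - (p - k) % p) % p = k
    rcases Nat.eq_zero_or_pos k with h0 | h0
    · subst h0; simp [Nat.mod_self]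
    · have h1 : (p - k) % p = p - k := Nat.mod_eq_of_lt (by omega)
      rw [h1, Nat.sub_sub_self hk.le, Nat.mod_eq_of_lt hk]
  · intro k hk
    simp only [Finset.mem_range] at hk
    show (p - (p - k) % p) % p = k
    rcases Nat.eq_zero_or_pos k with h0 | h0
    · subst h0; simp [Nat.mod_self]
    · have h1 : (p - k) % p = p - k := Nat.mod_eq_of_lt (by omega)
      rw [h1, Nat.sub_sub_self hk.le, Nat.mod_eq_of_lt hk]
  · intro k hk
    simp only [Finset.mem_range] at hk
    apply hμloc
    beta_reduce
    rcases Nat.eq_zero_or_pos k with h0 | h0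
    · subst h0; simp
    · have hm : (p - k) % p = p - k := Nat.mod_eq_of_lt (by omega)
      rw [hm]
      have key : x + (k : ℤ_[p]) * (p : ℤ_[p]) ^ n
          = (x - ((p - k : ℕ) : ℤ_[p]) * (p : ℤ_[p]) ^ n) + (p : ℤ_[p]) ^ (n + 1) := by
        have hcast : ((p - k : ℕ) : ℤ_[p]) = (p : ℤ_[p]) - (k : ℤ_[p]) := by
          push_cast [Nat.cast_sub (le_of_lt hk)]; ring
        rw [hcast]; ring
      rw [key, map_add, toZModPow_p_pow_succ, add_zero]

/-- the formal identity
`p·(ν∗μ)(a + pⁿ⁺¹ℤ_p) − (ν∗μ)(a + pⁿℤ_p)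
  = ∑_{j<pⁿ} ∑_{k<p} μ(a − j − kpⁿ + pⁿ⁺¹ℤ_p)·(p·ν(j + kpⁿ + pⁿ⁺¹ℤ_p) − ν(j + pⁿℤ_p))`. -/
theorem stmt8 {p : ℕ} [Fact p.Prime] {K : Type*} [NontriviallyNormedField K]
    (ν μ : ℕ → ℤ_[p] → K)
    (hνloc : LocallyConst p ν) (hνdist : IsDistrib p ν)
    (hμloc : LocallyConst p μ) (hμdist : IsDistrib p μ)
    (n : ℕ) (a : ℤ_[p]) :
    (p : K) * distConv p ν μ (n + 1) a - distConv p ν μ n a =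
      ∑ j ∈ Finset.range (p ^ n), ∑ k ∈ Finset.range p,
        μ (n + 1) (a - (j : ℤ_[p]) - (k : ℤ_[p]) * (p : ℤ_[p]) ^ n) *
          ((p : K) * ν (n + 1) ((j : ℤ_[p]) + (k : ℤ_[p]) * (p : ℤ_[p]) ^ n) - ν n (j : ℤ_[p])) := by
  have hp : 0 < p := (Fact.out : p.Prime).pos
  have h1 : distConv p ν μ (n + 1) a
      = ∑ j ∈ Finset.range (p ^ n), ∑ k ∈ Finset.range p,
          ν (n + 1) ((j : ℤ_[p]) + (k : ℤ_[p]) * (p : ℤ_[p]) ^ n)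
            * μ (n + 1) (a - (j : ℤ_[p]) - (k : ℤ_[p]) * (p : ℤ_[p]) ^ n) := by
    show (∑ i ∈ Finset.range (p ^ (n + 1)),
        ν (n + 1) (i : ℤ_[p]) * μ (n + 1) (a - (i : ℤ_[p]))) = _
    rw [pow_succ, mul_comm (p ^ n) p, mul_comm p (p ^ n),
      sum_range_mul_split (p ^ n) p (pow_pos hp n)]
    refine Finset.sum_congr rfl fun j _ => Finset.sum_congr rfl fun k _ => ?_
    have : ((j + k * p ^ n : ℕ) : ℤ_[p]) = (j : ℤ_[p]) + (k : ℤ_[p]) * (p : ℤ_[p]) ^ n := by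
      push_cast; ring
    rw [this]
    ring_nf
  have h2 : distConv p ν μ n a
      = ∑ j ∈ Finset.range (p ^ n), ∑ k ∈ Finset.range p,
          ν n (j : ℤ_[p]) * μ (n + 1) (a - (j : ℤ_[p]) - (k : ℤ_[p]) * (p : ℤ_[p]) ^ n) := by
    show (∑ j ∈ Finset.range (p ^ n), ν n (j : ℤ_[p]) * μ n (a - (j : ℤ_[p]))) = _
    refine Finset.sum_congr rfl fun j _ => ?_
    rw [hμdist n (a - (j : ℤ_[p])), sum_flip μ hμloc n (a - (j : ℤ_[p])), Finset.mul_sum]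
  rw [h1, h2, Finset.mul_sum, ← Finset.sum_sub_distrib]
  refine Finset.sum_congr rfl fun j _ => ?_
  rw [Finset.mul_sum, ← Finset.sum_sub_distrib]
  refine Finset.sum_congr rfl fun k _ => ?_
  ring
end

section
/- For a continuous function g : ℤ_p → ℂ_p and m ≥ 0, the shifted-convolution of the binomial function with g equals an iterated indefinite sum: C(·, m) ⊛ g = S^{m+1} g, where S is the indefinite sum operator acting on Mahler expansions by shifting coefficients: S(Σ_k b_k C(·,k)) = Σ_k b_k C(·, k+1). -/
open Finset

/-- The indefinite-sum operator `S`: `(S g)(0) = 0`, `(S g)(x+1) − (S g)(x) = g(x)`. -/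
def indefSum {K : Type*} [AddCommMonoid K] (g : ℕ → K) : ℕ → K :=
  fun N => ∑ i ∈ Finset.range N, g i

/-- The shifted-convolution product `(f ⊛ g)(n) = ∑_{i+j=n−1} f(i) g(j)`. -/
def shiftConv {K : Type*} [NonUnitalNonAssocSemiring K] (f g : ℕ → K) : ℕ → K :=
  fun N => ∑ i ∈ Finset.range N, f i * g (N - 1 - i)

lemma swap_aux {K : Type*} [CommRing K] (g : ℕ → K) (m : ℕ) (N : ℕ) :
    ∑ n ∈ range N, ∑ j ∈ range n, ((n - 1 - j).choose m : K) * g j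
      = ∑ j ∈ range N, ((N - 1 - j).choose (m + 1) : K) * g j := by
  induction N with
  | zero => simp
  | succ N ih =>
    rw [Finset.sum_range_succ, ih, Finset.sum_range_succ]
    have h0 : (N + 1 - 1 - N).choose (m + 1) = 0 := by simp
    rw [h0]
    push_cast
    rw [zero_mul, add_zero, ← Finset.sum_add_distrib]
    apply Finset.sum_congr rfl
    intro j hj
    have hj' : j < N := Finset.mem_range.mp hj
    have : N - j = (N - 1 - j) + 1 := by omega
    rw [this, Nat.choose_succ_succ]
    push_cast
    ring

lemma iter_indefSum {K : Type*} [CommRing K] (g : ℕ → K) (m : ℕ) :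
    ∀ N, indefSum^[m + 1] g N = ∑ j ∈ range N, ((N - 1 - j).choose m : K) * g j := by
  induction m with
  | zero =>
    intro N
    simp [indefSum]
  | succ m ih =>
    intro N
    rw [Function.iterate_succ_apply']
    show ∑ n ∈ range N, indefSum^[m + 1] g n = _
    calc ∑ n ∈ range N, indefSum^[m + 1] g n
        = ∑ n ∈ range N, ∑ j ∈ range n, ((n - 1 - j).choose m : K) * g j :=
          Finset.sum_congr rfl fun n _ => ih n
      _ = _ := swap_aux g m N

/-- `C(·,m) ⊛ g = S^{m+1} g` (on ℕ, hence by continuity on ℤ_p). -/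
theorem stmt19 {K : Type*} [CommRing K] (g : ℕ → K) (m : ℕ) :
    shiftConv (fun i => (i.choose m : K)) g = indefSum^[m + 1] g := by
  funext N
  rw [iter_indefSum]
  show ∑ i ∈ range N, ((i.choose m : K)) * g (N - 1 - i) = _
  rw [← Finset.sum_range_reflect (fun i => ((i.choose m : K)) * g (N - 1 - i)) N]
  apply Finset.sum_congr rfl
  intro j hj
  have hj' : j < N := Finset.mem_range.mp hj
  have : N - 1 - (N - 1 - j) = j := by omega
  rw [this]
end
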